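/- Let X ∈ S_n with smallest eigenvalue λ_min(X) ≥ −τ for some τ ≥ 0, let Y ∈ ℝ^{n×p} have every row of unit Euclidean norm with ‖X·Y‖ ≤ ε for some ε ≥ 0, and let S′ ∈ S_n be positive semidefinite with every diagonal entry equal to 1. Then ⟨X, S′ − Y·Yᵀ⟩ ≥ −n·τ − √n·ε. -/

import Mathlib

open Matrix BigOperators

/-- Frobenius inner product `⟨A, B⟩ = Tr(AᵀB)`. -/
noncomputable def fip {k l : Type*} [Fintype k] [Fintype l] (A B : Matrix k l ℝ) : ℝ :=
  (Aᵀ * B).trace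

/-- Frobenius norm `‖A‖ = √Tr(AᵀA)`. -/
noncomputable def frobNorm {k l : Type*} [Fintype k] [Fintype l] (A : Matrix k l ℝ) : ℝ :=
  Real.sqrt (fip A A)


lemma fip_eq_sum {k l : Type*} [Fintype k] [Fintype l] (A B : Matrix k l ℝ) :
    fip A B = ∑ q : k × l, A q.1 q.2 * B q.1 q.2 := by
  rw [Fintype.sum_prod_type]
  simp [fip, Matrix.trace, Matrix.mul_apply, Matrix.diag]
  rw [Finset.sum_comm]

lemma pos_cs {k l : Type*} [Fintype k] [Fintype l] (A B : Matrix k l ℝ) :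
    fip A B ≤ frobNorm A * frobNorm B := by
  rw [fip_eq_sum, frobNorm, frobNorm, fip_eq_sum, fip_eq_sum]
  have := Real.sum_mul_le_sqrt_mul_sqrt Finset.univ
    (fun q : k × l => A q.1 q.2) (fun q => B q.1 q.2)
  simpa only [← pow_two] using this

lemma neg_cs {k l : Type*} [Fintype k] [Fintype l] (A B : Matrix k l ℝ) :
    -(frobNorm A * frobNorm B) ≤ fip A B := by
  have h2 : -fip A B ≤ frobNorm A * frobNorm B := by
    rw [fip_eq_sum, frobNorm, frobNorm, fip_eq_sum, fip_eq_sum]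
    have := Real.sum_mul_le_sqrt_mul_sqrt Finset.univ
      (fun q : k × l => A q.1 q.2) (fun q => -B q.1 q.2)
    simp only [mul_neg, neg_sq, ← pow_two] at this ⊢
    rw [← Finset.sum_neg_distrib]
    convert this using 3 <;> ring
  linarith

lemma psd_diag_nonneg {m : Type*} [Fintype m] [DecidableEq m] {M : Matrix m m ℝ}
    (hM : M.PosSemidef) (i : m) : 0 ≤ M i i := by
  exact hM.diag_nonneg

lemma psd_trace_nonneg {m : Type*} [Fintype m] [DecidableEq m] {M : Matrix m m ℝ}
    (hM : M.PosSemidef) : 0 ≤ M.trace := by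
  exact Finset.sum_nonneg fun i _ => psd_diag_nonneg hM i

lemma trace_mul_psd_nonneg {m : Type*} [Fintype m] [DecidableEq m]
    {A B : Matrix m m ℝ} (hA : A.PosSemidef) (hB : B.PosSemidef) :
    0 ≤ (A * B).trace := by
  obtain ⟨C, rfl⟩ := (by open scoped MatrixOrder in exact CStarAlgebra.nonneg_iff_eq_star_mul_self.mp hB.nonneg : ∃ C : Matrix m m ℝ, B = star C * C)
  rw [← Matrix.mul_assoc, Matrix.trace_mul_cycle]
  exact psd_trace_nonneg (hA.mul_mul_conjTranspose_same C)

lemma shift_psd {m : ℕ} {X : Matrix (Fin m) (Fin m) ℝ} (hX : X.IsHermitian)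
    {τ : ℝ} (hEig : ∀ i, -τ ≤ hX.eigenvalues i) :
    (X + τ • (1 : Matrix (Fin m) (Fin m) ℝ)).PosSemidef := by
  set U : Matrix (Fin m) (Fin m) ℝ := (hX.eigenvectorUnitary : Matrix (Fin m) (Fin m) ℝ) with hUdef
  have hU : U * Uᴴ = 1 := Matrix.mem_unitaryGroup_iff.mp hX.eigenvectorUnitary.2
  have key : U * (Matrix.diagonal (RCLike.ofReal ∘ hX.eigenvalues)
      + τ • (1 : Matrix (Fin m) (Fin m) ℝ)) * Uᴴ = X + τ • 1 := by
    rw [Matrix.mul_add, Matrix.add_mul, Matrix.mul_smul, Matrix.mul_one, Matrix.smul_mul, hU]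
    congr 1
    exact (hX.spectral_theorem).symm
  rw [← key]
  refine Matrix.PosSemidef.mul_mul_conjTranspose_same ?_ U
  have : Matrix.diagonal (RCLike.ofReal ∘ hX.eigenvalues)
      + τ • (1 : Matrix (Fin m) (Fin m) ℝ)
      = Matrix.diagonal (fun i => hX.eigenvalues i + τ) := by
    rw [Matrix.smul_one_eq_diagonal, Matrix.diagonal_add]
    rfl
  rw [this]
  exact Matrix.posSemidef_diagonal_iff.mpr (fun i => by linarith [hEig i])

/-- if `λ_min(X) ≥ −τ`, `Y` has unit-norm rows with `‖X·Y‖ ≤ ε`,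
and `S′` is PSD with unit diagonal, then `⟨X, S′ − Y·Yᵀ⟩ ≥ −n·τ − √n·ε`. -/
theorem stmt12 {n p : ℕ} (X : Matrix (Fin n) (Fin n) ℝ)
    (hX : X.IsHermitian) (τ : ℝ) (hτ : 0 ≤ τ)
    (hEig : ∀ i, -τ ≤ hX.eigenvalues i)
    (Y : Matrix (Fin n) (Fin p) ℝ) (hY : ∀ i, ∑ j, (Y i j) ^ 2 = 1)
    (ε : ℝ) (hε : 0 ≤ ε) (hXY : frobNorm (X * Y) ≤ ε)
    (S' : Matrix (Fin n) (Fin n) ℝ)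
    (hS'psd : S'.PosSemidef) (hS'diag : ∀ i, S' i i = 1) :
    -(n : ℝ) * τ - Real.sqrt n * ε ≤ fip X (S' - Y * Yᵀ) := by
  have hXT : Xᵀ = X := by
    ext i j
    simpa using congrFun (congrFun hX i) j
  -- trace of S'
  have hStr : S'.trace = (n : ℝ) := by
    simp [Matrix.trace, Matrix.diag, hS'diag]
  -- part 1 : fip X S' ≥ -n τ
  have h1 : 0 ≤ ((X + τ • 1) * S').trace := trace_mul_psd_nonneg (shift_psd hX hEig) hS'psd
  have h1' : ((X + τ • 1) * S').trace = (X * S').trace + τ * (n : ℝ) := by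
    rw [Matrix.add_mul, Matrix.trace_add, Matrix.smul_mul, Matrix.one_mul, Matrix.trace_smul,
      hStr]
    rfl
  have hfipS : fip X S' = (X * S').trace := by rw [fip, hXT]
  -- part 2 : fip X (Y Yᵀ) ≤ √n ε
  have hfrobY : frobNorm Y = Real.sqrt n := by
    unfold frobNorm
    congr 1
    rw [fip_eq_sum, Fintype.sum_prod_type]
    simp only [← pow_two]
    simp [hY]
  have hswap : fip X (Y * Yᵀ) = fip (X * Y) Y := by
    rw [fip, fip, hXT, Matrix.transpose_mul, hXT, Matrix.mul_assoc, ← Matrix.mul_assoc X Y Yᵀ,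
      Matrix.trace_mul_comm]
  have hcs : fip (X * Y) Y ≤ frobNorm (X * Y) * frobNorm Y := pos_cs _ _
  rw [hfrobY] at hcs
  have hfn : 0 ≤ frobNorm (X * Y) := Real.sqrt_nonneg _
  have hsn : 0 ≤ Real.sqrt n := Real.sqrt_nonneg _
  have hmul : frobNorm (X * Y) * Real.sqrt n ≤ ε * Real.sqrt n :=
    mul_le_mul_of_nonneg_right hXY hsn
  -- combine
  have hsplit : fip X (S' - Y * Yᵀ) = fip X S' - fip X (Y * Yᵀ) := by
    rw [fip, fip, fip, Matrix.mul_sub, Matrix.trace_sub]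
  rw [hsplit, hfipS, hswap]
  nlinarith [h1, h1', hcs, hmul]
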